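/- Let 1 ≤ p < ∞ and let W be a matrix weight. Suppose (A_Q) is a sequence of positive definite matrices with |A_Q z|^p ≍ |Q|⁻¹ ∫_Q |W^{1/p}(x) z|^p dx for all z and all cubes Q in the family, with uniform constants. If W is doubling of order p with exponent β, then (A_Q) is strongly doubling of order (β, p): ‖A_Q A_P⁻¹‖^p ≤ C max{(ℓ(P)/ℓ(Q))^n, (ℓ(Q)/ℓ(P))^{β−n}} (1 + |x_Q − x_P| / max{ℓ(P), ℓ(Q)})^β for all cubes P, Q in the family. -/

import Mathlib

open MeasureTheory ComplexOrder
open scoped ENNReal NNReal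

noncomputable section

/-- The positive semidefinite `p`-th root `A^{1/p}` via the continuous functional calculus. -/
def matrixRpowInv (p : ℝ) {m : ℕ} (A : Matrix (Fin m) (Fin m) ℂ) : Matrix (Fin m) (Fin m) ℂ :=
  cfc (fun t : ℝ => t ^ (1 / p)) A

/-- The axis-parallel cube anchored at `x` (lower-left corner) with side length `l`. -/
def cubeA {n : ℕ} (x : EuclideanSpace ℝ (Fin n)) (l : ℝ) : Set (EuclideanSpace ℝ (Fin n)) :=
  {y | ∀ i, x i ≤ y i ∧ y i < x i + l}

/-- The average `|Q|⁻¹ ∫_Q |W^{1/p}(y) z|^p dy` over the anchored cube `Q = x + [0,l)^n`. -/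
def cubeAvg {n m : ℕ} (p : ℝ) (W : EuclideanSpace ℝ (Fin n) → Matrix (Fin m) (Fin m) ℂ)
    (x : EuclideanSpace ℝ (Fin n)) (l : ℝ) (z : EuclideanSpace ℂ (Fin m)) : ℝ≥0∞ :=
  (ENNReal.ofReal (l ^ n))⁻¹ *
    ∫⁻ y in cubeA x l, (‖Matrix.toEuclideanCLM (𝕜 := ℂ) (matrixRpowInv p (W y)) z‖₊ : ℝ≥0∞) ^ p

/-- The cube with the same center as `x + [0,l)^n` and twice the side length. -/
def cubeADouble {n : ℕ} (x : EuclideanSpace ℝ (Fin n)) (l : ℝ) :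
    Set (EuclideanSpace ℝ (Fin n)) :=
  {y | ∀ i, x i - l / 2 ≤ y i ∧ y i < x i - l / 2 + 2 * l}

/-! Cover `Q` by the cube concentric with `P` of side `2ᵏ ℓ(P)`, where
`2ᵏ ≈ 1 + 2 (|x_Q - x_P| + ℓ(Q)) / ℓ(P)`; `k` applications of the doubling condition give
`∫_Q |W^{1/p} w|^p ≤ 2^{kβ} ∫_P |W^{1/p} w|^p`. Through the reducing operators this becomes
`|A_Q w|^p ≤ (c₂/c₁) (ℓ(P)/ℓ(Q))ⁿ 2^{kβ} |A_P w|^p`, a bound on `‖A_Q A_P⁻¹‖^p`. Finally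
`2ᵏ ≤ 6 (L/ℓ(P)) (1 + |x_Q - x_P|/L)` with `L = max ℓ(P) ℓ(Q)`, and
`(ℓ(P)/ℓ(Q))ⁿ (L/ℓ(P))^β` is the first or the second term of the maximum according as
`ℓ(Q) ≤ ℓ(P)` or not. -/

section Cubes

variable {n : ℕ}

/-- Anchor of the cube concentric with `cubeA x l` and of side length `s * l`. -/
def concentricAnchor (x : EuclideanSpace ℝ (Fin n)) (l s : ℝ) : EuclideanSpace ℝ (Fin n) :=
  WithLp.toLp 2 fun i => x i + (1 - s) * l / 2

lemma concentricAnchor_one (x : EuclideanSpace ℝ (Fin n)) (l : ℝ) :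
    concentricAnchor x l 1 = x := by
  ext i
  simp [concentricAnchor]

lemma cubeADouble_concentricAnchor (x : EuclideanSpace ℝ (Fin n)) (l s : ℝ) :
    cubeADouble (concentricAnchor x l s) (s * l) =
      cubeA (concentricAnchor x l (2 * s)) (2 * s * l) := by
  ext y
  simp only [cubeADouble, cubeA, concentricAnchor, PiLp.toLp_apply, Set.mem_ofPred_eq]
  refine forall_congr' fun i => and_congr ?_ ?_ <;> ring_nf

lemma cubeA_subset_concentric {xQ xP : EuclideanSpace ℝ (Fin n)} {lQ lP s : ℝ}
    (hlQ : 0 ≤ lQ) (hlP : 0 ≤ lP) (h : 2 * (dist xQ xP + lQ) ≤ (s - 1) * lP) :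
    cubeA xQ lQ ⊆ cubeA (concentricAnchor xP lP s) (s * lP) := by
  intro y hy i
  have hdist := abs_le.mp ((Real.dist_eq _ _).symm.trans_le (PiLp.dist_apply_le xQ xP i))
  simp only [concentricAnchor, PiLp.toLp_apply]
  constructor <;> nlinarith [hy i]

lemma lintegral_cubeA_concentric_le_pow {g : EuclideanSpace ℝ (Fin n) → ℝ≥0∞} {c : ℝ≥0∞}
    (hdoubling : ∀ x l, 0 < l → ∫⁻ y in cubeADouble x l, g y ≤ c * ∫⁻ y in cubeA x l, g y)
    (x : EuclideanSpace ℝ (Fin n)) {l : ℝ} (hl : 0 < l) (k : ℕ) :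
    ∫⁻ y in cubeA (concentricAnchor x l (2 ^ k)) (2 ^ k * l), g y ≤
      c ^ k * ∫⁻ y in cubeA x l, g y := by
  induction k with
  | zero => simp [concentricAnchor_one]
  | succ k ih =>
    rw [pow_succ', ← cubeADouble_concentricAnchor, pow_succ']
    calc _ ≤ c * ∫⁻ y in cubeA (concentricAnchor x l (2 ^ k)) (2 ^ k * l), g y :=
          hdoubling _ _ (by positivity)
      _ ≤ c * (c ^ k * ∫⁻ y in cubeA x l, g y) := by gcongr
      _ = _ := (mul_assoc _ _ _).symm

lemma lintegral_cubeA_le_pow_of_doubling {g : EuclideanSpace ℝ (Fin n) → ℝ≥0∞} {c : ℝ≥0∞}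
    (hdoubling : ∀ x l, 0 < l → ∫⁻ y in cubeADouble x l, g y ≤ c * ∫⁻ y in cubeA x l, g y)
    {xQ xP : EuclideanSpace ℝ (Fin n)} {lQ lP : ℝ} (hlQ : 0 ≤ lQ) (hlP : 0 < lP) {k : ℕ}
    (hk : 2 * (dist xQ xP + lQ) ≤ (2 ^ k - 1) * lP) :
    ∫⁻ y in cubeA xQ lQ, g y ≤ c ^ k * ∫⁻ y in cubeA xP lP, g y :=
  (lintegral_mono_set (cubeA_subset_concentric hlQ hlP.le hk)).trans
    (lintegral_cubeA_concentric_le_pow hdoubling xP hlP k)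

end Cubes

lemma ENNReal.le_ofReal_mul_of_average_le {aQ aP IQ IP : ℝ≥0∞} {c₁ c₂ vQ vP M : ℝ}
    (hc₁ : 0 < c₁) (hc₂ : 0 ≤ c₂) (hvQ : 0 < vQ) (hvP : 0 < vP)
    (hQ : aQ ≤ ENNReal.ofReal c₂ * ((ENNReal.ofReal vQ)⁻¹ * IQ))
    (hP : ENNReal.ofReal c₁ * ((ENNReal.ofReal vP)⁻¹ * IP) ≤ aP)
    (hI : IQ ≤ ENNReal.ofReal M * IP) :
    aQ ≤ ENNReal.ofReal (c₂ / c₁ * (vP / vQ) * M) * aP := by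
  have hIP : IP ≤ ENNReal.ofReal vP * ((ENNReal.ofReal c₁)⁻¹ * aP) := by
    rwa [ENNReal.mul_le_iff_le_inv (ENNReal.ofReal_pos.mpr hc₁).ne' ENNReal.ofReal_ne_top,
      ENNReal.mul_le_iff_le_inv (ENNReal.inv_ne_zero.mpr ENNReal.ofReal_ne_top)
        (ENNReal.inv_ne_top.mpr (ENNReal.ofReal_pos.mpr hvP).ne'), inv_inv] at hP
  calc aQ ≤ ENNReal.ofReal c₂ * ((ENNReal.ofReal vQ)⁻¹ * (ENNReal.ofReal M *
        (ENNReal.ofReal vP * ((ENNReal.ofReal c₁)⁻¹ * aP)))) := by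
        refine hQ.trans ?_
        gcongr
        exact hI.trans (by gcongr)
    _ = ENNReal.ofReal (c₂ / c₁ * (vP / vQ) * M) * aP := by
        rw [ENNReal.ofReal_mul (by positivity), ENNReal.ofReal_mul (by positivity),
          ENNReal.ofReal_div_of_pos hc₁, ENNReal.ofReal_div_of_pos hvQ, div_eq_mul_inv,
          div_eq_mul_inv]
        ring

lemma ContinuousLinearMap.opNorm_rpow_le_of_forall {𝕜 E F : Type*} [NontriviallyNormedField 𝕜]
    [SeminormedAddCommGroup E] [SeminormedAddCommGroup F] [NormedSpace 𝕜 E] [NormedSpace 𝕜 F]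
    (T : E →L[𝕜] F) {p K : ℝ} (hp : 0 < p) (hK : 0 ≤ K)
    (h : ∀ z, (‖T z‖₊ : ℝ≥0∞) ^ p ≤ ENNReal.ofReal K * (‖z‖₊ : ℝ≥0∞) ^ p) :
    ‖T‖ ^ p ≤ K := by
  have hbound : ‖T‖ ≤ K ^ p⁻¹ := by
    refine T.opNorm_le_bound (by positivity) fun z => ?_
    have hz := h z
    rw [← enorm_eq_nnnorm, ← enorm_eq_nnnorm, ← ofReal_norm, ← ofReal_norm,
      ENNReal.ofReal_rpow_of_nonneg (norm_nonneg _) hp.le,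
      ENNReal.ofReal_rpow_of_nonneg (norm_nonneg _) hp.le, ← ENNReal.ofReal_mul hK,
      ENNReal.ofReal_le_ofReal_iff (by positivity)] at hz
    rwa [← Real.rpow_le_rpow_iff (norm_nonneg _) (by positivity) hp, Real.mul_rpow (by positivity)
      (norm_nonneg _), Real.rpow_inv_rpow hK hp.ne']
  calc ‖T‖ ^ p ≤ (K ^ p⁻¹) ^ p := by gcongr
    _ = K := Real.rpow_inv_rpow hK hp.ne'

lemma Matrix.norm_toEuclideanCLM_mul_inv_rpow_le {𝕜 ι : Type*} [RCLike 𝕜] [Fintype ι]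
    [DecidableEq ι] {B A : Matrix ι ι 𝕜} (hA : IsUnit A.det) {p K : ℝ} (hp : 0 < p) (hK : 0 ≤ K)
    (h : ∀ w, (‖Matrix.toEuclideanCLM (𝕜 := 𝕜) B w‖₊ : ℝ≥0∞) ^ p ≤
      ENNReal.ofReal K * (‖Matrix.toEuclideanCLM (𝕜 := 𝕜) A w‖₊ : ℝ≥0∞) ^ p) :
    ‖Matrix.toEuclideanCLM (𝕜 := 𝕜) (B * A⁻¹)‖ ^ p ≤ K := by
  refine ContinuousLinearMap.opNorm_rpow_le_of_forall _ hp hK fun z => ?_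
  have hAA : Matrix.toEuclideanCLM (𝕜 := 𝕜) A (Matrix.toEuclideanCLM (𝕜 := 𝕜) A⁻¹ z) = z := by
    rw [← mul_apply_eq_comp, ← map_mul, Matrix.mul_nonsing_inv _ hA, map_one,
      one_apply_eq_self]
  simpa only [map_mul, mul_apply_eq_comp, hAA] using h (Matrix.toEuclideanCLM (𝕜 := 𝕜) A⁻¹ z)

lemma exists_two_pow_near {r : ℝ} (hr : 1 ≤ r) : ∃ k : ℕ, r ≤ 2 ^ k ∧ (2 : ℝ) ^ k ≤ 2 * r := by
  obtain ⟨k, hk_le, hk_lt⟩ := exists_nat_pow_near hr one_lt_two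
  exact ⟨k + 1, hk_lt.le, by rw [pow_succ']; gcongr⟩

lemma two_mul_one_add_div_le_six_mul {lP lQ D : ℝ} (hlP : 0 < lP) (hD : 0 ≤ D) :
    2 * (1 + 2 * (D + lQ) / lP) ≤ 6 * (max lP lQ / lP) * (1 + D / max lP lQ) := by
  have hM : 0 < max lP lQ := lt_max_of_lt_left hlP
  rw [show 2 * (1 + 2 * (D + lQ) / lP) = 2 * (lP + 2 * (D + lQ)) / lP by field_simp,
    show 6 * (max lP lQ / lP) * (1 + D / max lP lQ) = 6 * (max lP lQ + D) / lP by field_simp,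
    div_le_div_iff_of_pos_right hlP]
  nlinarith [le_max_left lP lQ, le_max_right lP lQ]

lemma div_rpow_mul_max_div_rpow_le {lP lQ : ℝ} (hlP : 0 < lP) (hlQ : 0 < lQ) (a β : ℝ) :
    (lP / lQ) ^ a * (max lP lQ / lP) ^ β ≤ max ((lP / lQ) ^ a) ((lQ / lP) ^ (β - a)) := by
  rcases le_total lQ lP with h | h
  · rw [max_eq_left h, div_self hlP.ne', Real.one_rpow, mul_one]
    exact le_max_left _ _
  · rw [max_eq_right h, ← inv_div, Real.inv_rpow (by positivity), ← Real.rpow_neg (by positivity),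
      ← Real.rpow_add (by positivity), neg_add_eq_sub]
    exact le_max_right _ _

lemma pow_div_pow_mul_two_rpow_pow_le {n k : ℕ} {lP lQ D β : ℝ} (hlP : 0 < lP) (hlQ : 0 < lQ)
    (hD : 0 ≤ D) (hβ : 0 ≤ β) (hk : (2 : ℝ) ^ k ≤ 2 * (1 + 2 * (D + lQ) / lP)) :
    lP ^ n / lQ ^ n * (2 ^ β) ^ k ≤
      6 ^ β * max ((lP / lQ) ^ (n : ℝ)) ((lQ / lP) ^ (β - n)) * (1 + D / max lP lQ) ^ β := by
  set L := max lP lQ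
  calc lP ^ n / lQ ^ n * (2 ^ β) ^ k = (lP / lQ) ^ (n : ℝ) * (2 ^ k) ^ β := by
        rw [← Real.rpow_mul_natCast zero_le_two, ← Real.rpow_natCast_mul zero_le_two, mul_comm β,
          Real.rpow_natCast, div_pow]
    _ ≤ (lP / lQ) ^ (n : ℝ) * (6 * (L / lP) * (1 + D / L)) ^ β := by
        gcongr
        exact hk.trans (two_mul_one_add_div_le_six_mul hlP hD)
    _ = 6 ^ β * ((lP / lQ) ^ (n : ℝ) * (L / lP) ^ β) * (1 + D / L) ^ β := by
        rw [Real.mul_rpow (by positivity) (by positivity),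
          Real.mul_rpow (by positivity) (by positivity)]
        ring
    _ ≤ _ := by
        gcongr
        exact div_rpow_mul_max_div_rpow_le hlP hlQ n β

theorem reducing_operators_strongly_doubling_general {n m : ℕ} (p β : ℝ) (hp : 1 ≤ p) (hβ : 0 < β)
    (W : EuclideanSpace ℝ (Fin n) → Matrix (Fin m) (Fin m) ℂ)
    (hdoubling : ∀ (x : EuclideanSpace ℝ (Fin n)) (l : ℝ) (z : EuclideanSpace ℂ (Fin m)),
      0 < l →
      (∫⁻ y in cubeADouble x l,
          (‖Matrix.toEuclideanCLM (𝕜 := ℂ) (matrixRpowInv p (W y)) z‖₊ : ℝ≥0∞) ^ p) ≤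
        ENNReal.ofReal (2 ^ β) *
          ∫⁻ y in cubeA x l,
            (‖Matrix.toEuclideanCLM (𝕜 := ℂ) (matrixRpowInv p (W y)) z‖₊ : ℝ≥0∞) ^ p)
    (A : EuclideanSpace ℝ (Fin n) → ℝ → Matrix (Fin m) (Fin m) ℂ)
    (hApos : ∀ x l, (A x l).PosDef)
    (c₁ c₂ : ℝ) (hc₁ : 0 < c₁) (hc₂ : 0 < c₂)
    (hreduce : ∀ (x : EuclideanSpace ℝ (Fin n)) (l : ℝ) (z : EuclideanSpace ℂ (Fin m)),
      0 < l →
      ENNReal.ofReal c₁ * cubeAvg p W x l z ≤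
          (‖Matrix.toEuclideanCLM (𝕜 := ℂ) (A x l) z‖₊ : ℝ≥0∞) ^ p ∧
        (‖Matrix.toEuclideanCLM (𝕜 := ℂ) (A x l) z‖₊ : ℝ≥0∞) ^ p ≤
          ENNReal.ofReal c₂ * cubeAvg p W x l z) :
    ∃ C : ℝ, 0 < C ∧
      ∀ (xQ xP : EuclideanSpace ℝ (Fin n)) (lQ lP : ℝ), 0 < lQ → 0 < lP →
        ‖Matrix.toEuclideanCLM (𝕜 := ℂ) (A xQ lQ * (A xP lP)⁻¹)‖ ^ p ≤
          C * max ((lP / lQ) ^ (n : ℝ)) ((lQ / lP) ^ (β - n)) *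
            (1 + dist xQ xP / max lP lQ) ^ β := by
  have hp₀ : 0 < p := zero_lt_one.trans_le hp
  refine ⟨c₂ / c₁ * 6 ^ β, by positivity, fun xQ xP lQ lP hlQ hlP => ?_⟩
  set D := dist xQ xP
  set L := max lP lQ
  have hD : 0 ≤ D := dist_nonneg
  obtain ⟨k, hk_lower, hk_upper⟩ :=
    exists_two_pow_near (r := 1 + 2 * (D + lQ) / lP) (le_add_of_nonneg_right (by positivity))
  have hcover : 2 * (D + lQ) ≤ (2 ^ k - 1) * lP := by
    rwa [← le_sub_iff_add_le', div_le_iff₀ hlP] at hk_lower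
  have hcompare : ∀ w, (‖Matrix.toEuclideanCLM (𝕜 := ℂ) (A xQ lQ) w‖₊ : ℝ≥0∞) ^ p ≤
      ENNReal.ofReal (c₂ / c₁ * (lP ^ n / lQ ^ n) * (2 ^ β) ^ k) *
        (‖Matrix.toEuclideanCLM (𝕜 := ℂ) (A xP lP) w‖₊ : ℝ≥0∞) ^ p := fun w =>
    ENNReal.le_ofReal_mul_of_average_le hc₁ hc₂.le (by positivity) (by positivity)
      (hreduce xQ lQ w hlQ).2 (hreduce xP lP w hlP).1 <| by
        rw [ENNReal.ofReal_pow (by positivity)]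
        exact lintegral_cubeA_le_pow_of_doubling (hdoubling · · w) hlQ.le hlP hcover
  have hA_det : IsUnit (A xP lP).det := (Matrix.isUnit_iff_isUnit_det _).mp (hApos xP lP).isUnit
  calc _ ≤ c₂ / c₁ * (lP ^ n / lQ ^ n) * (2 ^ β) ^ k :=
        Matrix.norm_toEuclideanCLM_mul_inv_rpow_le hA_det hp₀ (by positivity) hcompare
    _ ≤ c₂ / c₁ * (6 ^ β * max ((lP / lQ) ^ (n : ℝ)) ((lQ / lP) ^ (β - n)) * (1 + D / L) ^ β) := by
        rw [mul_assoc]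
        exact mul_le_mul_of_nonneg_left
          (pow_div_pow_mul_two_rpow_pow_le hlP hlQ hD hβ.le hk_upper) (by positivity)
    _ = _ := by ring

/-- Let `1 ≤ p < ∞` and `W` a matrix weight. Suppose `(A_Q)` is a family of
positive definite matrices with `|A_Q z|^p ≍ |Q|⁻¹ ∫_Q |W^{1/p}(x) z|^p dx` for all `z` and all
cubes `Q` (reducing operators of order `p`), with uniform constants. If `W` is doubling of
order `p` with exponent `β`, then `(A_Q)` is strongly doubling of order `(β, p)`:
`‖A_Q A_P⁻¹‖^p ≤ C max{(ℓ(P)/ℓ(Q))^n, (ℓ(Q)/ℓ(P))^{β−n}} (1 + |x_Q − x_P|/max{ℓ(P),ℓ(Q)})^β`. -/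
theorem reducing_operators_strongly_doubling {n m : ℕ} (p β : ℝ) (hp : 1 ≤ p) (hβ : 0 < β)
    (W : EuclideanSpace ℝ (Fin n) → Matrix (Fin m) (Fin m) ℂ)
    (hWpos : ∀ x, (W x).PosSemidef)
    (hdoubling : ∀ (x : EuclideanSpace ℝ (Fin n)) (l : ℝ) (z : EuclideanSpace ℂ (Fin m)),
      0 < l →
      (∫⁻ y in cubeADouble x l,
          (‖Matrix.toEuclideanCLM (𝕜 := ℂ) (matrixRpowInv p (W y)) z‖₊ : ℝ≥0∞) ^ p) ≤
        ENNReal.ofReal (2 ^ β) *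
          ∫⁻ y in cubeA x l,
            (‖Matrix.toEuclideanCLM (𝕜 := ℂ) (matrixRpowInv p (W y)) z‖₊ : ℝ≥0∞) ^ p)
    (A : EuclideanSpace ℝ (Fin n) → ℝ → Matrix (Fin m) (Fin m) ℂ)
    (hApos : ∀ x l, (A x l).PosDef)
    (c₁ c₂ : ℝ) (hc₁ : 0 < c₁) (hc₂ : 0 < c₂)
    (hreduce : ∀ (x : EuclideanSpace ℝ (Fin n)) (l : ℝ) (z : EuclideanSpace ℂ (Fin m)),
      0 < l →
      ENNReal.ofReal c₁ * cubeAvg p W x l z ≤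
          (‖Matrix.toEuclideanCLM (𝕜 := ℂ) (A x l) z‖₊ : ℝ≥0∞) ^ p ∧
        (‖Matrix.toEuclideanCLM (𝕜 := ℂ) (A x l) z‖₊ : ℝ≥0∞) ^ p ≤
          ENNReal.ofReal c₂ * cubeAvg p W x l z) :
    ∃ C : ℝ, 0 < C ∧
      ∀ (xQ xP : EuclideanSpace ℝ (Fin n)) (lQ lP : ℝ), 0 < lQ → 0 < lP →
        ‖Matrix.toEuclideanCLM (𝕜 := ℂ) (A xQ lQ * (A xP lP)⁻¹)‖ ^ p ≤
          C * max ((lP / lQ) ^ (n : ℝ)) ((lQ / lP) ^ (β - n)) *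
            (1 + dist xQ xP / max lP lQ) ^ β :=
  reducing_operators_strongly_doubling_general p β hp hβ W hdoubling A hApos c₁ c₂ hc₁ hc₂ hreduce

end
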